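/- The additive subgroup Λ' of ℂ² generated by the four vectors u₁ = (ζ−ζ⁴, ζ²−ζ³), u₂ = (ζ²−ζ³, ζ⁴−ζ), w₁ = (1,1), w₂ = (ζ+ζ⁴, ζ²+ζ³) is contained in Λ, and Λ' has index 4 as a subgroup of Λ. -/

import Mathlib

noncomputable section

/-- The primitive fifth root of unity `ζ = exp(2πi/5)`. -/
def ζ : ℂ := Complex.exp (2 * Real.pi * Complex.I / 5)

/-- The lattice `Λ ⊆ ℂ²` generated by `(1,1)`, `(ζ,ζ²)`, `(ζ²,ζ⁴)`, `(ζ³,ζ)`. -/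
def Λ : AddSubgroup (ℂ × ℂ) :=
  AddSubgroup.closure {((1 : ℂ), (1 : ℂ)), (ζ, ζ ^ 2), (ζ ^ 2, ζ ^ 4), (ζ ^ 3, ζ)}

/-- The sublattice `Λ'` generated by `u₁ = (ζ−ζ⁴, ζ²−ζ³)`, `u₂ = (ζ²−ζ³, ζ⁴−ζ)`,
`w₁ = (1,1)`, `w₂ = (ζ+ζ⁴, ζ²+ζ³)`. -/
def Λ' : AddSubgroup (ℂ × ℂ) :=
  AddSubgroup.closure
    {(ζ - ζ ^ 4, ζ ^ 2 - ζ ^ 3), (ζ ^ 2 - ζ ^ 3, ζ ^ 4 - ζ),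
     ((1 : ℂ), (1 : ℂ)), (ζ + ζ ^ 4, ζ ^ 2 + ζ ^ 3)}

/-!
The four generators of `Λ` are `ℤ`-linearly independent, because their first coordinates
`1, ζ, ζ², ζ³` are (the minimal polynomial `Φ₅` of `ζ` has degree 4). Using
`1 + ζ + ζ² + ζ³ + ζ⁴ = 0`, the generators of `Λ'` are integral combinations of them whose
coefficient matrix has determinant `-4`, and the row lattice of a nonsingular integer matrix
has index `|det|` in `ℤⁿ`.
-/

open Module

theorem IsPrimitiveRoot.linearIndependent_int_pow {K : Type*} [Field K] [CharZero K] {μ : K}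
    {n : ℕ} (h : IsPrimitiveRoot μ n) (hn : 0 < n) :
    LinearIndependent ℤ (fun i : Fin n.totient ↦ μ ^ (i : ℕ)) := by
  have hli := linearIndependent_pow (K := ℚ) μ
  rw [← Polynomial.cyclotomic_eq_minpoly_rat h hn, Polynomial.natDegree_cyclotomic] at hli
  exact hli.restrict_scalars' ℤ

theorem Matrix.index_span_rows_eq_natAbs_det {ι : Type*} [Fintype ι] [DecidableEq ι]
    (A : Matrix ι ι ℤ) (hA : A.det ≠ 0) :
    (Submodule.span ℤ (Set.range A)).toAddSubgroup.index = A.det.natAbs := by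
  have hli := Matrix.linearIndependent_rows_of_det_ne_zero hA
  rw [AddSubgroup.index_eq_natAbs_det (Pi.basisFun ℤ ι) _ (Basis.span hli),
    Pi.basisFun_det_apply]
  congr
  ext i j
  exact congrFun (congrArg Subtype.val (Basis.span_apply hli i)) j

lemma isPrimitiveRoot_ζ : IsPrimitiveRoot ζ 5 := by
  simpa [ζ] using Complex.isPrimitiveRoot_exp 5 (by norm_num)

def latticeBasis : Fin 4 → ℂ × ℂ := ![(1, 1), (ζ, ζ ^ 2), (ζ ^ 2, ζ ^ 4), (ζ ^ 3, ζ)]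

def latticeCombination : (Fin 4 → ℤ) →+ ℂ × ℂ :=
  (Fintype.linearCombination ℤ latticeBasis).toAddMonoidHom

lemma linearIndependent_latticeBasis : LinearIndependent ℤ latticeBasis := by
  have hpow := isPrimitiveRoot_ζ.linearIndependent_int_pow (by norm_num)
  rw [Nat.totient_prime (by norm_num)] at hpow
  have hfst : LinearMap.fst ℤ ℂ ℂ ∘ latticeBasis = fun i : Fin 4 ↦ ζ ^ (i : ℕ) := by
    ext i
    fin_cases i <;> simp [latticeBasis]
  exact LinearIndependent.of_comp (LinearMap.fst ℤ ℂ ℂ) (hfst ▸ hpow)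

lemma injective_latticeCombination : Function.Injective latticeCombination :=
  linearIndependent_iff_injective_fintypeLinearCombination.mp linearIndependent_latticeBasis

lemma Λ_eq_map_top : Λ = (⊤ : AddSubgroup (Fin 4 → ℤ)).map latticeCombination := by
  have hrange : Set.range latticeBasis =
      {((1 : ℂ), (1 : ℂ)), (ζ, ζ ^ 2), (ζ ^ 2, ζ ^ 4), (ζ ^ 3, ζ)} := by
    simp only [latticeBasis, Matrix.range_cons, Matrix.range_empty, Set.union_empty,
      Set.singleton_union]
  rw [← AddMonoidHom.range_eq_map, Λ, ← hrange, ← Submodule.span_int_eq_addSubgroupClosure,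
    ← Fintype.range_linearCombination]
  rfl

/-- Row `i` holds the coordinates, with respect to `latticeBasis`, of the `i`-th generator
`u₁, u₂, w₁, w₂` of `Λ'`. -/
def sublatticeMatrix : Matrix (Fin 4) (Fin 4) ℤ :=
  !![1, 2, 1, 1; 0, 0, 1, -1; 1, 0, 0, 0; -1, 0, -1, -1]

lemma det_sublatticeMatrix : sublatticeMatrix.det = -4 := by
  decide

lemma latticeCombination_sublatticeMatrix :
    (fun i ↦ latticeCombination (sublatticeMatrix i)) = ![(ζ - ζ ^ 4, ζ ^ 2 - ζ ^ 3),
      (ζ ^ 2 - ζ ^ 3, ζ ^ 4 - ζ), ((1 : ℂ), (1 : ℂ)), (ζ + ζ ^ 4, ζ ^ 2 + ζ ^ 3)] := by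
  have hsum : 1 + ζ + ζ ^ 2 + ζ ^ 3 + ζ ^ 4 = 0 := by
    simpa [Finset.sum_range_succ] using isPrimitiveRoot_ζ.geom_sum_eq_zero (by norm_num)
  ext i : 1
  fin_cases i <;>
    simp [latticeCombination, sublatticeMatrix, latticeBasis, Fintype.linearCombination_apply,
      Fin.sum_univ_four, Prod.ext_iff] <;>
    constructor <;> first | linear_combination hsum | linear_combination -hsum | ring1

lemma Λ'_eq_map_span_rows :
    Λ' = (Submodule.span ℤ (Set.range sublatticeMatrix)).toAddSubgroup.map latticeCombination := by
  have himage : latticeCombination '' Set.range sublatticeMatrix =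
      Set.range fun i ↦ latticeCombination (sublatticeMatrix i) := (Set.range_comp _ _).symm
  rw [Submodule.span_int_eq_addSubgroupClosure, AddMonoidHom.map_closure, himage,
    latticeCombination_sublatticeMatrix, Λ']
  simp only [Matrix.range_cons, Matrix.range_empty, Set.union_empty, Set.singleton_union]

/-- `Λ' ⊆ Λ`, and `Λ'` has index 4 in `Λ`. -/
theorem sublattice_index_four :
    Λ' ≤ Λ ∧ Λ'.relIndex Λ = 4 := by
  rw [Λ'_eq_map_span_rows, Λ_eq_map_top]
  refine ⟨AddSubgroup.map_mono le_top, ?_⟩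
  rw [AddSubgroup.relIndex_map_map_of_injective _ _ injective_latticeCombination,
    AddSubgroup.relIndex_top_right,
    Matrix.index_span_rows_eq_natAbs_det _ (by simp [det_sublatticeMatrix]),
    det_sublatticeMatrix]
  rfl

end
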